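/- For a, a', b > 0, the normalizing constant of the real beta-hypergeometric distribution is symmetric in (a, a'): ₃F₂(a,a,b;a+b,a+a';1)/(Γ(a')Γ(a+b)) = ₃F₂(a',a',b;a'+b,a+a';1)/(Γ(a)Γ(a'+b)). -/

import Mathlib

/-!
Each side is `Γ(a + a') / (Γ(a)² Γ(a')² Γ(b))` times `I(a, a')`, resp. `I(a', a)`, where
`I(a, a') = ∫₀¹ ∫₀¹ t^(a-1) (1-t)^(a'-1) x^(a-1) (1-x)^(b-1) (1-xt)^(-b) dx dt`:
expanding `(1-xt)^(-b)` in the binomial series and integrating term by term gives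
`∑ (b)ₙ/n! · B(a+n, b) · B(a+n, a')`, which is the `₃F₂` series. And `I` is symmetric: the
substitution `u = xt` turns it into an integral over the triangle `0 < u < t < 1`, and the
reflection `(t, u) ↦ (1 - u, 1 - t)` of the triangle exchanges `a` and `a'` in the new integrand.
-/

open MeasureTheory ProbabilityTheory Real Set Filter Topology

noncomputable def gammaDens (p σ y : ℝ) : ℝ :=
  if 0 < y then σ ^ p / Real.Gamma p * Real.exp (-(σ * y)) * y ^ (p - 1) else 0

noncomputable def gammaM (p σ : ℝ) : Measure ℝ :=
  MeasureTheory.volume.withDensity fun y => ENNReal.ofReal (gammaDens p σ y)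

noncomputable def beta1Dens (p q x : ℝ) : ℝ :=
  if 0 < x ∧ x < 1 then
    Real.Gamma (p + q) / (Real.Gamma p * Real.Gamma q) * x ^ (p - 1) * (1 - x) ^ (q - 1)
  else 0

noncomputable def beta1 (p q : ℝ) : Measure ℝ :=
  MeasureTheory.volume.withDensity fun x => ENNReal.ofReal (beta1Dens p q x)

noncomputable def beta2Dens (p q y : ℝ) : ℝ :=
  if 0 < y then
    Real.Gamma (p + q) / (Real.Gamma p * Real.Gamma q) * y ^ (p - 1) * (1 + y) ^ (-(p + q))
  else 0

noncomputable def beta2 (p q : ℝ) : Measure ℝ :=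
  MeasureTheory.volume.withDensity fun y => ENNReal.ofReal (beta2Dens p q y)

/-- Pochhammer (rising factorial) symbol `(a)_n`. -/
noncomputable def poch (a : ℝ) (n : ℕ) : ℝ := ∏ i ∈ Finset.range n, (a + (i : ℝ))

/-- Gauss hypergeometric function `₂F₁(a,b;c;x)`. -/
noncomputable def F21 (a b c x : ℝ) : ℝ :=
  ∑' n : ℕ, poch a n * poch b n / ((n.factorial : ℝ) * poch c n) * x ^ n

/-- Generalized hypergeometric `₃F₂(a₁,a₂,a₃;b₁,b₂;1)` at unit argument. -/
noncomputable def F32one (a1 a2 a3 b1 b2 : ℝ) : ℝ :=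
  ∑' n : ℕ, poch a1 n * poch a2 n * poch a3 n /
    ((n.factorial : ℝ) * poch b1 n * poch b2 n)

/-- Normalizing constant of the real beta-hypergeometric distribution. -/
noncomputable def Cbh (a a' b : ℝ) : ℝ :=
  Real.Gamma (a + b) / (Real.Gamma a * Real.Gamma b * F32one a a b (a + b) (a + a'))

noncomputable def bhDens (a a' b x : ℝ) : ℝ :=
  if 0 < x ∧ x < 1 then
    Cbh a a' b * x ^ (a - 1) * (1 - x) ^ (b - 1) * F21 a b (a + a') x
  else 0

/-- The real beta-hypergeometric distribution `μ_{a,a',b}`. -/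
noncomputable def bhMeasure (a a' b : ℝ) : Measure ℝ :=
  MeasureTheory.volume.withDensity fun x => ENNReal.ofReal (bhDens a a' b x)

open scoped ENNReal Nat

lemma poch_pos {a : ℝ} (ha : 0 < a) (n : ℕ) : 0 < poch a n :=
  Finset.prod_pos fun i _ => by positivity

lemma poch_eq_ascPochhammer_eval (a : ℝ) (n : ℕ) : poch a n = (ascPochhammer ℝ n).eval a := by
  induction n with
  | zero => simp [poch]
  | succ n ih => rw [poch, Finset.prod_range_succ, ← poch, ih, ascPochhammer_succ_right]; simp

lemma poch_div_factorial_eq_choose (b : ℝ) (n : ℕ) :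
    poch b n / n ! = Ring.choose (b + n - 1) n := by
  rw [Ring.choose_eq_smul, Polynomial.descPochhammer_smeval_eq_ascPochhammer,
    Polynomial.ascPochhammer_smeval_eq_eval, poch_eq_ascPochhammer_eval, smul_eq_mul,
    inv_mul_eq_div]
  congr 2
  ring

lemma Gamma_add_natCast_eq_poch_mul {a : ℝ} (ha : 0 < a) (n : ℕ) :
    Real.Gamma (a + n) = poch a n * Real.Gamma a := by
  induction n with
  | zero => simp [poch]
  | succ n ih =>
    rw [Nat.cast_succ, ← add_assoc, Real.Gamma_add_one (by positivity), ih, poch, poch,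
      Finset.prod_range_succ]
    ring

lemma poch_div_factorial_mul_beta_nonneg {b p q : ℝ} (hb : 0 < b) (hp : 0 < p) (hq : 0 < q)
    (n : ℕ) : 0 ≤ poch b n / n ! * beta (p + n) q := by
  have := poch_pos hb n
  have := beta_pos (by positivity : 0 < p + n) hq
  positivity

lemma hasSum_poch_div_factorial_mul_pow (b : ℝ) {y : ℝ} (hy : |y| < 1) :
    HasSum (fun n : ℕ => poch b n / n ! * y ^ n) ((1 - y) ^ (-b)) := by
  have := (Real.one_div_one_sub_rpow_hasFPowerSeriesOnBall_zero b).hasSum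
    (y := y) (by simpa [enorm_eq_nnnorm, ← NNReal.coe_lt_coe] using hy)
  rw [zero_add, one_div, ← Real.rpow_neg (by linarith [le_abs_self y])] at this
  refine this.congr_fun fun n => ?_
  rw [FormalMultilinearSeries.ofScalars_apply_eq, poch_div_factorial_eq_choose, smul_eq_mul]

lemma lintegral_rpow_mul_one_sub_rpow {p q : ℝ} (hp : 0 < p) (hq : 0 < q) :
    ∫⁻ x in Ioo 0 1, ENNReal.ofReal (x ^ (p - 1) * (1 - x) ^ (q - 1)) =
      ENNReal.ofReal (beta p q) := by
  have h := lintegral_betaPDF_eq_one hp hq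
  have hB := beta_pos hp hq
  simp_rw [lintegral_betaPDF, mul_assoc, ENNReal.ofReal_mul (one_div_pos.2 hB).le] at h
  rw [lintegral_const_mul' _ _ ENNReal.ofReal_ne_top] at h
  rw [← mul_one (ENNReal.ofReal (beta p q)), ← h, ← mul_assoc, ← ENNReal.ofReal_mul hB.le,
    mul_one_div_cancel hB.ne', ENNReal.ofReal_one, one_mul]

lemma lintegral_rpow_mul_one_sub_rpow_mul_one_sub_mul_rpow {p q b t : ℝ} (hp : 0 < p)
    (hq : 0 < q) (hb : 0 < b) (ht₀ : 0 ≤ t) (ht₁ : t ≤ 1) :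
    ∫⁻ x in Ioo 0 1, ENNReal.ofReal (x ^ (p - 1) * (1 - x) ^ (q - 1) * (1 - x * t) ^ (-b)) =
      ∑' n : ℕ, ENNReal.ofReal (poch b n / n ! * beta (p + n) q * t ^ n) := by
  have expand : ∀ x ∈ Ioo (0 : ℝ) 1,
      ENNReal.ofReal (x ^ (p - 1) * (1 - x) ^ (q - 1) * (1 - x * t) ^ (-b)) =
        ∑' n : ℕ, ENNReal.ofReal (poch b n / n ! * t ^ n) *
          ENNReal.ofReal (x ^ (p + n - 1) * (1 - x) ^ (q - 1)) := by
    rintro x ⟨hx₀, hx₁⟩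
    have hxt : |x * t| < 1 := by
      rw [abs_of_nonneg (by positivity)]
      nlinarith
    have hsum := (hasSum_poch_div_factorial_mul_pow b hxt).mul_left
      (x ^ (p - 1) * (1 - x) ^ (q - 1))
    have h1x : 0 ≤ 1 - x := by linarith
    rw [← hsum.tsum_eq, ENNReal.ofReal_tsum_of_nonneg
      (fun n => by have := poch_pos hb n; positivity) hsum.summable]
    refine tsum_congr fun n => ?_
    rw [← ENNReal.ofReal_mul (by have := poch_pos hb n; positivity), add_sub_right_comm,
      Real.rpow_add_natCast hx₀.ne']
    congr 1
    ring
  rw [setLIntegral_congr_fun measurableSet_Ioo expand, lintegral_tsum (fun n => by fun_prop)]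
  refine tsum_congr fun n => ?_
  rw [lintegral_const_mul _ (by fun_prop), lintegral_rpow_mul_one_sub_rpow (by positivity) hq,
    ← ENNReal.ofReal_mul (by have := poch_pos hb n; positivity)]
  congr 1
  ring

noncomputable def eulerIntegral (a a' b : ℝ) : ℝ≥0∞ :=
  ∫⁻ t in Ioo 0 1, ∫⁻ x in Ioo 0 1, ENNReal.ofReal
    (t ^ (a - 1) * (1 - t) ^ (a' - 1) * (x ^ (a - 1) * (1 - x) ^ (b - 1) * (1 - x * t) ^ (-b)))

lemma eulerIntegral_eq_tsum {a a' b : ℝ} (ha : 0 < a) (ha' : 0 < a') (hb : 0 < b) :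
    eulerIntegral a a' b =
      ∑' n : ℕ, ENNReal.ofReal (poch b n / n ! * beta (a + n) b * beta (a + n) a') := by
  have inner : ∀ t ∈ Ioo (0 : ℝ) 1,
      ∫⁻ x in Ioo 0 1, ENNReal.ofReal (t ^ (a - 1) * (1 - t) ^ (a' - 1) *
          (x ^ (a - 1) * (1 - x) ^ (b - 1) * (1 - x * t) ^ (-b))) =
        ∑' n : ℕ, ENNReal.ofReal (poch b n / n ! * beta (a + n) b) *
          ENNReal.ofReal (t ^ (a + n - 1) * (1 - t) ^ (a' - 1)) := by
    rintro t ⟨ht₀, ht₁⟩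
    have h1t : 0 ≤ 1 - t := by linarith
    simp_rw [ENNReal.ofReal_mul (by positivity : 0 ≤ t ^ (a - 1) * (1 - t) ^ (a' - 1))]
    rw [lintegral_const_mul' _ _ ENNReal.ofReal_ne_top,
      lintegral_rpow_mul_one_sub_rpow_mul_one_sub_mul_rpow ha hb hb ht₀.le ht₁.le,
      ← ENNReal.tsum_mul_left]
    refine tsum_congr fun n => ?_
    rw [← ENNReal.ofReal_mul (poch_div_factorial_mul_beta_nonneg hb ha hb n),
      ← ENNReal.ofReal_mul (by positivity),
      add_sub_right_comm, Real.rpow_add_natCast ht₀.ne']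
    congr 1
    ring
  rw [eulerIntegral, setLIntegral_congr_fun measurableSet_Ioo inner,
    lintegral_tsum (fun n => by fun_prop)]
  refine tsum_congr fun n => ?_
  rw [lintegral_const_mul _ (by fun_prop), lintegral_rpow_mul_one_sub_rpow (by positivity) ha',
    ← ENNReal.ofReal_mul (poch_div_factorial_mul_beta_nonneg hb ha hb n)]

def unitTriangle : Set (ℝ × ℝ) := {p | 0 < p.2 ∧ p.2 < p.1 ∧ p.1 < 1}

lemma measurableSet_unitTriangle : MeasurableSet unitTriangle := by
  unfold unitTriangle; measurability

lemma setLIntegral_unitTriangle {F : ℝ × ℝ → ℝ≥0∞} (hF : Measurable F) :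
    ∫⁻ p in unitTriangle, F p = ∫⁻ t in Ioo 0 1, ∫⁻ u in Ioo 0 t, F (t, u) := by
  rw [← lintegral_indicator measurableSet_unitTriangle, Measure.volume_eq_prod,
    lintegral_prod _ (hF.indicator measurableSet_unitTriangle).aemeasurable,
    ← lintegral_indicator measurableSet_Ioo]
  congr 1
  funext t
  by_cases ht : t ∈ Ioo 0 1
  · rw [indicator_of_mem ht, ← lintegral_indicator measurableSet_Ioo]
    congr 1
    funext u
    simp only [indicator, unitTriangle, mem_ofPred_eq, mem_Ioo, ht.2, and_true]
  · have hzero (u : ℝ) : unitTriangle.indicator F (t, u) = 0 :=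
      indicator_of_notMem (fun hu => ht ⟨hu.1.trans hu.2.1, hu.2.2⟩) _
    simp only [indicator_of_notMem ht, hzero, lintegral_zero]

lemma setLIntegral_unitTriangle_comp_reflect {F : ℝ × ℝ → ℝ≥0∞} (hF : Measurable F) :
    ∫⁻ p in unitTriangle, F (1 - p.2, 1 - p.1) = ∫⁻ p in unitTriangle, F p := by
  have hσ : MeasurePreserving (fun p : ℝ × ℝ => (1 - p.2, 1 - p.1)) := by
    have h := ((Measure.measurePreserving_sub_left volume (1 : ℝ)).prod
      (Measure.measurePreserving_sub_left volume (1 : ℝ))).comp Measure.measurePreserving_swap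
    rw [← Measure.volume_eq_prod] at h
    exact h
  have hpre : (fun p : ℝ × ℝ => (1 - p.2, 1 - p.1)) ⁻¹' unitTriangle = unitTriangle := by
    ext p
    simp only [unitTriangle, mem_preimage, mem_ofPred_eq]
    constructor <;> rintro ⟨h1, h2, h3⟩ <;> refine ⟨?_, ?_, ?_⟩ <;> linarith
  rw [← hσ.setLIntegral_comp_preimage measurableSet_unitTriangle hF, hpre]

noncomputable def triangleKernel (a a' b : ℝ) (p : ℝ × ℝ) : ℝ :=
  p.1 ^ (-b) * (1 - p.1) ^ (a' - 1) * p.2 ^ (a - 1) * (p.1 - p.2) ^ (b - 1) * (1 - p.2) ^ (-b)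

lemma lintegral_Ioo_eq_lintegral_triangleKernel (a a' b : ℝ) {t : ℝ} (ht : 0 < t) :
    ∫⁻ x in Ioo 0 1, ENNReal.ofReal (t ^ (a - 1) * (1 - t) ^ (a' - 1) *
        (x ^ (a - 1) * (1 - x) ^ (b - 1) * (1 - x * t) ^ (-b))) =
      ∫⁻ u in Ioo 0 t, ENNReal.ofReal (triangleKernel a a' b (t, u)) := by
  have himage : (fun u => u * t⁻¹) '' Ioo 0 t = Ioo 0 1 := by
    rw [image_mul_right_Ioo _ _ (inv_pos.2 ht), zero_mul, mul_inv_cancel₀ ht.ne']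
  rw [← himage, lintegral_image_eq_lintegral_abs_deriv_mul measurableSet_Ioo
    (fun u _ => (hasDerivAt_mul_const t⁻¹).hasDerivWithinAt)
    (mul_left_injective₀ (inv_ne_zero ht.ne')).injOn]
  refine setLIntegral_congr_fun measurableSet_Ioo fun u ⟨hu₀, hut⟩ => ?_
  rw [← ENNReal.ofReal_mul (abs_nonneg _)]
  congr 1
  have h1 : 1 - u * t⁻¹ = (t - u) * t⁻¹ := by field_simp
  rw [h1, inv_mul_cancel_right₀ ht.ne', Real.mul_rpow hu₀.le (inv_nonneg.2 ht.le),
    Real.mul_rpow (by linarith) (inv_nonneg.2 ht.le), abs_of_pos (inv_pos.2 ht), triangleKernel]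
  simp only [Real.inv_rpow ht.le, Real.rpow_neg ht.le, Real.rpow_sub_one ht.ne']
  field_simp

lemma triangleKernel_reflect (a a' b : ℝ) (p : ℝ × ℝ) :
    triangleKernel a a' b (1 - p.2, 1 - p.1) = triangleKernel a' a b p := by
  simp only [triangleKernel, sub_sub_cancel, sub_sub_sub_cancel_left]
  ring

lemma eulerIntegral_eq_setLIntegral_unitTriangle (a a' b : ℝ) :
    eulerIntegral a a' b = ∫⁻ p in unitTriangle, ENNReal.ofReal (triangleKernel a a' b p) := by
  rw [setLIntegral_unitTriangle (by unfold triangleKernel; fun_prop)]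
  exact setLIntegral_congr_fun measurableSet_Ioo fun t ht =>
    lintegral_Ioo_eq_lintegral_triangleKernel a a' b ht.1

lemma eulerIntegral_comm (a a' b : ℝ) : eulerIntegral a a' b = eulerIntegral a' a b := by
  rw [eulerIntegral_eq_setLIntegral_unitTriangle, eulerIntegral_eq_setLIntegral_unitTriangle,
    ← setLIntegral_unitTriangle_comp_reflect (by unfold triangleKernel; fun_prop)]
  simp_rw [triangleKernel_reflect]

lemma F32one_div_Gamma_eq_mul_eulerIntegral {a a' b : ℝ} (ha : 0 < a) (ha' : 0 < a')
    (hb : 0 < b) :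
    F32one a a b (a + b) (a + a') / (Real.Gamma a' * Real.Gamma (a + b)) =
      Real.Gamma (a + a') / (Real.Gamma a ^ 2 * Real.Gamma a' ^ 2 * Real.Gamma b) *
        (eulerIntegral a a' b).toReal := by
  rw [eulerIntegral_eq_tsum ha ha' hb, ENNReal.tsum_toReal_eq fun _ => ENNReal.ofReal_ne_top,
    F32one, ← tsum_div_const, ← tsum_mul_left]
  refine tsum_congr fun n => ?_
  rw [ENNReal.toReal_ofReal (mul_nonneg (poch_div_factorial_mul_beta_nonneg hb ha hb n)
      (beta_pos (by positivity) ha').le),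
    beta, beta, Gamma_add_natCast_eq_poch_mul ha, add_right_comm,
    Gamma_add_natCast_eq_poch_mul (add_pos ha hb), add_right_comm a,
    Gamma_add_natCast_eq_poch_mul (add_pos ha ha')]
  have := poch_pos ha n
  have := poch_pos (add_pos ha hb) n
  have := poch_pos (add_pos ha ha') n
  have := Real.Gamma_pos_of_pos ha
  have := Real.Gamma_pos_of_pos ha'
  have := Real.Gamma_pos_of_pos (add_pos ha hb)
  have := Real.Gamma_pos_of_pos (add_pos ha ha')
  field_simp

theorem bh_constant_symmetric (a a' b : ℝ) (ha : 0 < a) (ha' : 0 < a') (hb : 0 < b) :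
    F32one a a b (a + b) (a + a') / (Real.Gamma a' * Real.Gamma (a + b)) =
      F32one a' a' b (a' + b) (a + a') / (Real.Gamma a * Real.Gamma (a' + b)) := by
  rw [F32one_div_Gamma_eq_mul_eulerIntegral ha ha' hb, add_comm a a',
    F32one_div_Gamma_eq_mul_eulerIntegral ha' ha hb, eulerIntegral_comm]
  ring
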